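/- Let m ≥ 2 and let T be the perfect rooted m-ary tree of depth r. If t is even and 1 ≤ t ≤ r, then the number of paths of length t in T equals (1/2)(m+1) · m^(t/2 − 1) · (V_R(r) − V_R(t/2 − 1)) − (t/2) · m^(t−1), where V_R(d) is the number of vertices in the perfect rooted m-ary tree of depth d. -/

import Mathlib

open SimpleGraph Finset

/-- `IsPerfectRootedMary m r H ρ` says that `H` is the perfect rooted `m`-ary tree of
depth `r` with root `ρ`: a tree whose root `ρ` has degree `m`, in which every other
vertex has degree `1` or `m + 1`, whose maximum distance from `ρ` to a vertex is `r`,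
and in which every degree-`1` vertex is at distance exactly `r` from `ρ`.
(For `r = 0` the root-degree condition is dropped, so that the one-vertex tree is the
perfect rooted tree of depth `0`.) -/
def IsPerfectRootedMary (m r : ℕ) {W : Type} [Fintype W] (H : SimpleGraph W)
    [DecidableRel H.Adj] (ρ : W) : Prop :=
  H.IsTree ∧
    (0 < r → H.degree ρ = m) ∧
    (∀ v : W, v ≠ ρ → H.degree v = 1 ∨ H.degree v = m + 1) ∧
    (∀ v : W, H.dist ρ v ≤ r) ∧
    (∃ v : W, H.dist ρ v = r) ∧
    (∀ v : W, H.degree v = 1 → H.dist ρ v = r)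

/-- The number of paths of length `t` in `H`, i.e. the number of unordered pairs of
vertices at distance exactly `t` from each other. -/
noncomputable def pathCount {W : Type} [Fintype W] [DecidableEq W] (H : SimpleGraph W) (t : ℕ) : ℕ :=
  (Finset.univ.filter fun p : Sym2 W => ∃ u v : W, p = s(u, v) ∧ H.dist u v = t).card

/-!
Count ordered pairs `(u, v)` at distance `t` by their meet `w` (the deepest common ancestor)
and by the number `a` of levels from `w` down to `u`. If `a = 0` or `a = t`, one endpoint is
`w` and there are `m ^ t` such pairs; otherwise `u` and `v` lie below two distinct children of
`w`, which gives `(m ^ 2 - m) * m ^ (t - 2)` pairs. Either way the pairs exist exactly when `w`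
has depth at most `r - max a (t - a)`, and there are `V_R (r - max a (t - a))` such vertices.
Summing over `a` (the summand depends only on `min a (t - a)`) and halving yields the formula.
The values of `V_R` come from the balls around the root, which are perfect rooted `m`-ary trees
of smaller depth.
-/

namespace SimpleGraph

section Metric

variable {V : Type*} {G : SimpleGraph V}

theorem Connected.exists_dist_eq_of_le_dist (hG : G.Connected) {a b : V} {k : ℕ}
    (hk : k ≤ G.dist a b) : ∃ z, G.dist a z = k ∧ G.dist z b = G.dist a b - k := by
  obtain ⟨p, hp⟩ := hG.exists_walk_length_eq_dist a b
  have hleft := dist_le (p.take k)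
  have hright := dist_le (p.drop k)
  have htri : G.dist a b ≤ G.dist a (p.getVert k) + G.dist (p.getVert k) b := hG.dist_triangle
  rw [Walk.take_length] at hleft
  rw [Walk.drop_length] at hright
  exact ⟨p.getVert k, by omega, by omega⟩

theorem IsTree.eq_of_dist_add_dist_eq (hG : G.IsTree) {a b x y : V}
    (hx : G.dist a x + G.dist x b = G.dist a b) (hy : G.dist a y + G.dist y b = G.dist a b)
    (h : G.dist a x = G.dist a y) : x = y := by
  -- a geodesic through `x` is the unique `a`-`b` path, and `x` is its vertex at position `dist a x`
  have getVert_eq {z : V} (hz : G.dist a z + G.dist z b = G.dist a b) (P : G.Walk a b)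
      (hP : P.IsPath) : P.getVert (G.dist a z) = z := by
    obtain ⟨p, hp⟩ := hG.connected.exists_walk_length_eq_dist a z
    obtain ⟨q, hq⟩ := hG.connected.exists_walk_length_eq_dist z b
    have hpq : (p.append q).IsPath :=
      (p.append q).isPath_of_length_eq_dist (by rw [Walk.length_append, hp, hq, hz])
    rw [(hG.existsUnique_path a b).unique hP hpq, ← hp, Walk.getVert_append', if_pos le_rfl,
      Walk.getVert_length]
  obtain ⟨P, hP, -⟩ := hG.existsUnique_path a b
  rw [← getVert_eq hx P hP, ← getVert_eq hy P hP, h]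

end Metric

section Descendants

variable {V : Type*} [Fintype V] (G : SimpleGraph V) (ρ : V)

/-- The vertices `k` levels below `x` in the tree rooted at `ρ`. -/
noncomputable def descendants (x : V) (k : ℕ) : Finset V :=
  {u | G.dist x u = k ∧ G.dist ρ u = G.dist ρ x + k}

variable {G ρ}

@[simp]
theorem mem_descendants {x u : V} {k : ℕ} :
    u ∈ G.descendants ρ x k ↔ G.dist x u = k ∧ G.dist ρ u = G.dist ρ x + k := by
  simp [descendants]

theorem Connected.descendants_zero (hG : G.Connected) (x : V) : G.descendants ρ x 0 = {x} := by
  ext u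
  simp only [mem_descendants, hG.dist_eq_zero_iff, add_zero, mem_singleton]
  constructor
  · rintro ⟨rfl, -⟩
    rfl
  · rintro rfl
    exact ⟨rfl, rfl⟩

theorem Connected.mem_descendants_trans (hG : G.Connected) {w c u : V} {i j : ℕ}
    (hc : c ∈ G.descendants ρ w i) (hu : u ∈ G.descendants ρ c j) :
    u ∈ G.descendants ρ w (i + j) := by
  rw [mem_descendants] at *
  have h₁ : G.dist w u ≤ G.dist w c + G.dist c u := hG.dist_triangle
  have h₂ : G.dist ρ u ≤ G.dist ρ w + G.dist w u := hG.dist_triangle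
  omega

theorem Connected.exists_mem_descendants_of_le (hG : G.Connected) {w u : V} {i k : ℕ}
    (hu : u ∈ G.descendants ρ w k) (hik : i ≤ k) :
    ∃ c ∈ G.descendants ρ w i, u ∈ G.descendants ρ c (k - i) := by
  rw [mem_descendants] at hu
  obtain ⟨c, hwc, hcu⟩ := hG.exists_dist_eq_of_le_dist (a := w) (b := u) (by omega : i ≤ _)
  have h₁ : G.dist ρ c ≤ G.dist ρ w + G.dist w c := hG.dist_triangle
  have h₂ : G.dist ρ u ≤ G.dist ρ c + G.dist c u := hG.dist_triangle
  exact ⟨c, mem_descendants.2 ⟨hwc, by omega⟩, mem_descendants.2 ⟨by omega, by omega⟩⟩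

theorem IsTree.eq_of_mem_descendants (hG : G.IsTree) {c c' u : V} {k : ℕ}
    (hc : u ∈ G.descendants ρ c k) (hc' : u ∈ G.descendants ρ c' k) : c = c' := by
  rw [mem_descendants] at hc hc'
  exact hG.eq_of_dist_add_dist_eq (a := ρ) (b := u) (by omega) (by omega) (by omega)

theorem IsTree.descendants_succ [DecidableEq V] (hG : G.IsTree) (x : V) (k : ℕ) :
    G.descendants ρ x (k + 1) = (G.descendants ρ x 1).biUnion (G.descendants ρ · k) := by
  ext u
  simp only [mem_biUnion]
  constructor
  · intro hu
    obtain ⟨c, hc, hcu⟩ := hG.connected.exists_mem_descendants_of_le hu (Nat.le_add_left 1 k)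
    exact ⟨c, hc, by simpa using hcu⟩
  · rintro ⟨c, hc, hcu⟩
    simpa [add_comm] using hG.connected.mem_descendants_trans hc hcu

theorem IsTree.pairwiseDisjoint_descendants (hG : G.IsTree) (s : Finset V) (k : ℕ) :
    (s : Set V).PairwiseDisjoint (G.descendants ρ · k) :=
  fun _ _ _ _ hne => Finset.disjoint_left.2 fun _ hc hc' => hne (hG.eq_of_mem_descendants hc hc')

theorem IsTree.exists_meet (hG : G.IsTree) (u v : V) :
    ∃ w a b, u ∈ G.descendants ρ w a ∧ v ∈ G.descendants ρ w b ∧ G.dist u v = a + b := by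
  induction h : G.dist u v generalizing u with
  | zero =>
    obtain rfl := hG.connected.dist_eq_zero_iff.1 h
    exact ⟨u, 0, 0, by simp [hG.connected.descendants_zero]⟩
  | succ n ih =>
    obtain ⟨u', huu', hu'v⟩ := hG.connected.exists_dist_eq_of_le_dist (a := u) (b := v)
      (by omega : 1 ≤ _)
    obtain ⟨w, a, b, hu'w, hvw, hab⟩ := ih u' (by omega)
    have hadj : G.Adj u u' := dist_eq_one_iff_adj.1 huu'
    rcases hG.dist_eq_dist_add_one_of_adj ρ hadj with hdepth | hdepth
    · refine ⟨w, a + 1, b, hG.connected.mem_descendants_trans hu'w ?_, hvw, by omega⟩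
      exact mem_descendants.2 ⟨by rw [dist_comm]; exact huu', hdepth ▸ rfl⟩
    · -- `u'` is a child of `u`, so `u` itself is the meet
      have hu : u' ∈ G.descendants ρ u 1 := mem_descendants.2 ⟨huu', hdepth⟩
      refine ⟨u, 0, n + 1, by simp [hG.connected.descendants_zero], ?_, by omega⟩
      rcases Nat.eq_zero_or_pos a with rfl | ha
      · rw [hG.connected.descendants_zero, mem_singleton] at hu'w
        subst hu'w
        obtain rfl : b = n := by omega
        simpa [add_comm] using hG.connected.mem_descendants_trans hu hvw
      · exfalso
        obtain ⟨c, hc, hu'c⟩ := hG.connected.exists_mem_descendants_of_le hu'w (Nat.sub_le a 1)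
        rw [Nat.sub_sub_self ha] at hu'c
        obtain rfl := hG.eq_of_mem_descendants hu hu'c
        have h₁ : G.dist u v ≤ G.dist u w + G.dist w v := hG.connected.dist_triangle
        rw [dist_comm (u := u) (v := w)] at h₁
        simp only [mem_descendants] at hc hvw
        omega

theorem mem_descendants_root_dist (x : V) : x ∈ G.descendants ρ ρ (G.dist ρ x) := by
  simp

theorem IsTree.mem_descendants_of_dist_le (hG : G.IsTree) {c x u : V} {i a : ℕ}
    (hc : u ∈ G.descendants ρ c i) (hx : u ∈ G.descendants ρ x a) (h : G.dist ρ c ≤ G.dist ρ x) :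
    x ∈ G.descendants ρ c (G.dist ρ x - G.dist ρ c) := by
  obtain ⟨z, hz, hxz⟩ := hG.connected.exists_mem_descendants_of_le (mem_descendants_root_dist x) h
  have hzu := hG.connected.mem_descendants_trans hxz hx
  rw [mem_descendants] at hz hzu
  have hc' := mem_descendants.1 hc
  obtain rfl : z = c := hG.eq_of_mem_descendants (u := u) (k := i)
    (mem_descendants.2 ⟨by omega, by omega⟩) hc
  exact hxz

theorem IsTree.dist_eq_of_mem_descendants_of_ne (hG : G.IsTree) {w c c' u v : V} {i j : ℕ}
    (hc : c ∈ G.descendants ρ w 1) (hc' : c' ∈ G.descendants ρ w 1) (hne : c ≠ c')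
    (hu : u ∈ G.descendants ρ c i) (hv : v ∈ G.descendants ρ c' j) : G.dist u v = i + j + 2 := by
  obtain ⟨x, a, b, hux, hvx, hab⟩ := hG.exists_meet (ρ := ρ) u v
  have hxw : G.dist ρ x ≤ G.dist ρ w := by
    by_contra! hwx
    have hcx := hG.mem_descendants_of_dist_le hu hux (by simp at hc; omega)
    have hc'x := hG.mem_descendants_of_dist_le hv hvx (by simp at hc'; omega)
    simp only [mem_descendants] at hc hc'
    exact hne (hG.eq_of_mem_descendants hcx (by rwa [hc.2, ← hc'.2]))
  have huw := hG.connected.mem_descendants_trans hc hu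
  have hvw := hG.connected.mem_descendants_trans hc' hv
  have htri : G.dist u v ≤ G.dist u w + G.dist w v := hG.connected.dist_triangle
  rw [dist_comm (u := u) (v := w)] at htri
  simp only [mem_descendants] at huw hvw hux hvx
  omega

end Descendants

section Degree

variable {V : Type*} [Fintype V] [DecidableEq V] {G : SimpleGraph V} [DecidableRel G.Adj] {ρ : V}

theorem IsTree.card_filter_neighborFinset_dist_lt (hG : G.IsTree) (x : V) :
    #{y ∈ G.neighborFinset x | G.dist ρ y < G.dist ρ x} = if x = ρ then 0 else 1 := by
  split_ifs with hx
  · subst hx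
    simp
  · have hpos : 0 < G.dist ρ x := hG.connected.pos_dist_of_ne (Ne.symm hx)
    obtain ⟨p, hxp, hpρ⟩ := hG.connected.exists_dist_eq_of_le_dist (a := x) (b := ρ) (k := 1)
      (by rw [dist_comm]; omega)
    rw [dist_comm (u := p), dist_comm (u := x)] at hpρ
    have hchild {y : V} (hy : G.Adj x y) (hyx : G.dist ρ y < G.dist ρ x) :
        x ∈ G.descendants ρ y 1 := by
      rcases hG.dist_eq_dist_add_one_of_adj ρ hy with h | h
      · exact mem_descendants.2 ⟨dist_eq_one_iff_adj.2 hy.symm, h⟩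
      · omega
    have hp : p ∈ {y ∈ G.neighborFinset x | G.dist ρ y < G.dist ρ x} := by
      simp only [mem_filter, mem_neighborFinset, ← dist_eq_one_iff_adj]
      omega
    refine card_eq_one.2 ⟨p, eq_singleton_iff_unique_mem.2 ⟨hp, fun y hy => ?_⟩⟩
    simp only [mem_filter, mem_neighborFinset] at hy hp
    exact hG.eq_of_mem_descendants (hchild hy.1 hy.2) (hchild hp.1 hp.2)

theorem IsTree.degree_eq_card_descendants_add (hG : G.IsTree) (x : V) :
    G.degree x = #(G.descendants ρ x 1) + if x = ρ then 0 else 1 := by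
  rw [← card_neighborFinset_eq_degree,
    ← card_filter_add_card_filter_not (fun y => G.dist ρ y < G.dist ρ x),
    hG.card_filter_neighborFinset_dist_lt, add_comm]
  congr 2
  ext y
  simp only [mem_filter, mem_neighborFinset, mem_descendants, not_lt, ← dist_eq_one_iff_adj]
  constructor
  · rintro ⟨hy, hyx⟩
    rcases hG.dist_eq_dist_add_one_of_adj ρ (dist_eq_one_iff_adj.1 hy) with h | h <;>
      exact ⟨hy, by omega⟩
  · rintro ⟨hy, h⟩
    exact ⟨hy, by omega⟩

end Degree

section Ball

variable {V : Type*} {G : SimpleGraph V} {ρ : V}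

theorem Connected.exists_walk_induce_dist_le (hG : G.Connected) {d : ℕ}
    (v : {v | G.dist ρ v ≤ d}) :
    ∃ p : (G.induce {v | G.dist ρ v ≤ d}).Walk ⟨ρ, by simp⟩ v, p.length = G.dist ρ v := by
  classical
  obtain ⟨p, hp⟩ := hG.exists_walk_length_eq_dist ρ v
  have hsupp : ∀ z ∈ p.support, z ∈ {v | G.dist ρ v ≤ d} := fun z hz =>
    (dist_le (p.takeUntil z hz)).trans <|
      (p.length_takeUntil_le_length hz).trans (hp ▸ v.2)
  refine ⟨p.induce _ hsupp, ?_⟩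
  rw [← hp, ← Walk.length_map (Embedding.induce _).toHom, Walk.map_induce]
  rfl

theorem Connected.dist_induce_dist_le (hG : G.Connected) {d : ℕ} (v : {v | G.dist ρ v ≤ d}) :
    (G.induce {v | G.dist ρ v ≤ d}).dist ⟨ρ, by simp⟩ v = G.dist ρ v := by
  obtain ⟨p, hp⟩ := hG.exists_walk_induce_dist_le v
  refine le_antisymm (hp ▸ dist_le p) ?_
  obtain ⟨q, hq⟩ := (Walk.reachable p).exists_walk_length_eq_dist
  rw [← hq, ← Walk.length_map (Embedding.induce _).toHom]
  exact dist_le _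

theorem Connected.induce_dist_le (hG : G.Connected) (d : ℕ) :
    (G.induce {v | G.dist ρ v ≤ d}).Connected :=
  (connected_iff_exists_forall_reachable _).2
    ⟨⟨ρ, by simp⟩, fun v => (hG.exists_walk_induce_dist_le v).elim fun p _ => p.reachable⟩

variable [Fintype V] [DecidableRel G.Adj]

theorem Connected.degree_induce_dist_le_of_lt (hG : G.Connected) {d : ℕ}
    {v : {v | G.dist ρ v ≤ d}} (hv : G.dist ρ v < d) :
    (G.induce {v | G.dist ρ v ≤ d}).degree v = G.degree v :=
  degree_induce_of_neighborSet_subset fun y hy => by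
    have : G.dist ρ y ≤ G.dist ρ v + G.dist v y := hG.dist_triangle
    rw [dist_eq_one_iff_adj.2 hy] at this
    change G.dist ρ y ≤ d
    omega

theorem IsTree.degree_induce_dist_le_of_eq [DecidableEq V] (hG : G.IsTree) {d : ℕ}
    {v : {v | G.dist ρ v ≤ d}} (hv : G.dist ρ v = d) (hvρ : (v : V) ≠ ρ) :
    (G.induce {v | G.dist ρ v ≤ d}).degree v = 1 := by
  have hparent := hG.card_filter_neighborFinset_dist_lt (ρ := ρ) v
  rw [if_neg hvρ] at hparent
  rw [← card_neighborFinset_eq_degree, ← card_map, map_neighborFinset_induce, ← hparent]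
  congr 1
  ext y
  simp only [mem_inter, mem_neighborFinset, Set.mem_toFinset, Set.mem_ofPred_eq, Finset.mem_filter]
  refine and_congr_right fun hy => ?_
  have := hG.dist_ne_of_adj ρ hy
  omega

end Ball

section Pairs

variable {V : Type} [Fintype V] [DecidableEq V] {G : SimpleGraph V}

theorem card_filter_dist_eq_two_mul_pathCount {t : ℕ} (ht : t ≠ 0) :
    #{p : V × V | G.dist p.1 p.2 = t} = 2 * pathCount G t := by
  have hmaps : ∀ p ∈ ({p : V × V | G.dist p.1 p.2 = t} : Finset _),
      s(p.1, p.2) ∈ ({z : Sym2 V | ∃ u v, z = s(u, v) ∧ G.dist u v = t} : Finset _) :=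
    fun p hp => mem_filter.2 ⟨mem_univ _, p.1, p.2, rfl, (mem_filter.1 hp).2⟩
  rw [pathCount, card_eq_sum_card_fiberwise hmaps, mul_comm]
  refine sum_const_nat fun z hz => ?_
  obtain ⟨u, v, rfl, huv⟩ := (mem_filter.1 hz).2
  have hne : u ≠ v := by
    rintro rfl
    simp [ht.symm] at huv
  rw [← card_pair (a := (u, v)) (b := (v, u)) (by simp [hne])]
  congr 1
  ext ⟨x, y⟩
  simp only [mem_filter, mem_univ, true_and, Sym2.eq_iff, mem_insert, mem_singleton,
    Prod.mk.injEq]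
  constructor
  · rintro ⟨-, h⟩
    exact h
  · rintro (⟨rfl, rfl⟩ | ⟨rfl, rfl⟩)
    · exact ⟨huv, Or.inl ⟨rfl, rfl⟩⟩
    · exact ⟨by rwa [dist_comm], Or.inr ⟨rfl, rfl⟩⟩

end Pairs

section MeetPairs

variable {V : Type*} [Fintype V] (G : SimpleGraph V) (ρ : V)

/-- The pairs at distance `t` whose meet is `w` and whose first vertex lies `a` levels below `w`. -/
noncomputable def meetPairs (t : ℕ) (w : V) (a : ℕ) : Finset (V × V) :=
  {p ∈ G.descendants ρ w a ×ˢ G.descendants ρ w (t - a) | G.dist p.1 p.2 = t}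

variable {G ρ}

theorem IsTree.filter_dist_eq_eq_biUnion_meetPairs [DecidableEq V] (hG : G.IsTree) (t : ℕ) :
    ({p : V × V | G.dist p.1 p.2 = t} : Finset (V × V)) =
      (univ ×ˢ range (t + 1)).biUnion fun q => G.meetPairs ρ t q.1 q.2 := by
  ext ⟨u, v⟩
  simp only [Finset.mem_filter, mem_univ, true_and, mem_biUnion, mem_product, mem_range, meetPairs]
  constructor
  · rintro rfl
    obtain ⟨w, a, b, hu, hv, hab⟩ := hG.exists_meet (ρ := ρ) u v
    exact ⟨(w, a), by omega, ⟨hu, by rwa [hab, Nat.add_sub_cancel_left]⟩, rfl⟩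
  · rintro ⟨-, -, -, h⟩
    exact h

theorem IsTree.pairwiseDisjoint_meetPairs (hG : G.IsTree) (t : ℕ) :
    ((univ ×ˢ range (t + 1) : Finset (V × ℕ)) : Set (V × ℕ)).PairwiseDisjoint
      fun q => G.meetPairs ρ t q.1 q.2 := by
  rintro ⟨w, a⟩ hq ⟨w', a'⟩ hq' hne
  refine Finset.disjoint_left.2 fun ⟨u, v⟩ h h' => hne ?_
  simp only [coe_product, coe_univ, coe_range, Set.mem_prod, Set.mem_univ, Set.mem_Iio,
    true_and] at hq hq'
  simp only [meetPairs, Finset.mem_filter, mem_product] at h h'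
  have hu := mem_descendants.1 h.1.1
  have hu' := mem_descendants.1 h'.1.1
  have hv := mem_descendants.1 h.1.2
  have hv' := mem_descendants.1 h'.1.2
  obtain rfl : a = a' := by omega
  rw [hG.eq_of_mem_descendants h.1.1 h'.1.1]

theorem IsTree.meetPairs_of_eq_zero_or_eq (hG : G.IsTree) {t a : ℕ} (w : V)
    (ha : a = 0 ∨ a = t) :
    G.meetPairs ρ t w a = G.descendants ρ w a ×ˢ G.descendants ρ w (t - a) := by
  refine filter_true_of_mem fun ⟨u, v⟩ h => ?_
  simp only [mem_product] at h
  rcases ha with rfl | rfl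
  · rw [hG.connected.descendants_zero, mem_singleton] at h
    obtain ⟨rfl, hv⟩ := h
    simpa using (mem_descendants.1 hv).1
  · rw [Nat.sub_self, hG.connected.descendants_zero, mem_singleton] at h
    obtain ⟨hu, rfl⟩ := h
    rw [dist_comm]
    exact (mem_descendants.1 hu).1

theorem IsTree.meetPairs_eq_biUnion [DecidableEq V] (hG : G.IsTree) {t a : ℕ} (w : V) (ha : 0 < a)
    (hat : a < t) :
    G.meetPairs ρ t w a = (G.descendants ρ w 1).offDiag.biUnion
      fun q => G.descendants ρ q.1 (a - 1) ×ˢ G.descendants ρ q.2 (t - a - 1) := by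
  ext ⟨u, v⟩
  simp only [meetPairs, Finset.mem_filter, mem_product, mem_biUnion, mem_offDiag, Prod.exists]
  constructor
  · rintro ⟨⟨hu, hv⟩, huv⟩
    obtain ⟨c, hc, hcu⟩ := hG.connected.exists_mem_descendants_of_le hu (by omega : 1 ≤ a)
    obtain ⟨c', hc', hcv⟩ := hG.connected.exists_mem_descendants_of_le hv (by omega : 1 ≤ t - a)
    refine ⟨c, c', ⟨hc, hc', ?_⟩, hcu, hcv⟩
    rintro rfl
    have htri : G.dist u v ≤ G.dist u c + G.dist c v := hG.connected.dist_triangle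
    rw [dist_comm (u := u) (v := c)] at htri
    simp only [mem_descendants] at hcu hcv
    omega
  · rintro ⟨c, c', ⟨hc, hc', hne⟩, hu, hv⟩
    refine ⟨⟨?_, ?_⟩, ?_⟩
    · simpa [show 1 + (a - 1) = a by omega] using hG.connected.mem_descendants_trans hc hu
    · simpa [show 1 + (t - a - 1) = t - a by omega] using hG.connected.mem_descendants_trans hc' hv
    · rw [hG.dist_eq_of_mem_descendants_of_ne hc hc' hne hu hv]
      omega

end MeetPairs

end SimpleGraph

namespace IsPerfectRootedMary

open SimpleGraph

variable {V : Type} [Fintype V] {G : SimpleGraph V} [DecidableRel G.Adj] {ρ : V} {m r : ℕ}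

theorem isTree (hG : IsPerfectRootedMary m r G ρ) : G.IsTree := hG.1

theorem dist_le (hG : IsPerfectRootedMary m r G ρ) (v : V) : G.dist ρ v ≤ r := hG.2.2.2.1 v

theorem descendants_eq_empty (hG : IsPerfectRootedMary m r G ρ) {x : V} {k : ℕ}
    (h : r < G.dist ρ x + k) : G.descendants ρ x k = ∅ := by
  ext u
  simp only [mem_descendants, Finset.notMem_empty, iff_false, not_and]
  have := hG.dist_le u
  omega

theorem exists_dist_eq (hG : IsPerfectRootedMary m r G ρ) {d : ℕ} (hd : d ≤ r) :
    ∃ v, G.dist ρ v = d := by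
  obtain ⟨u, hu⟩ := hG.2.2.2.2.1
  obtain ⟨v, hv, -⟩ :=
    hG.isTree.connected.exists_mem_descendants_of_le (mem_descendants_root_dist u) (hu ▸ hd)
  exact ⟨v, by simpa using hv⟩

variable [DecidableEq V]

theorem card_descendants_one (hG : IsPerfectRootedMary m r G ρ) {x : V}
    (hx : G.dist ρ x < r) : #(G.descendants ρ x 1) = m := by
  obtain ⟨hT, hroot, hdeg, -, -, hleaf⟩ := hG
  have h := hT.degree_eq_card_descendants_add (ρ := ρ) x
  split_ifs at h with hxρ
  · subst hxρ
    rw [← hroot (by omega), h, add_zero]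
  · rcases hdeg x hxρ with h1 | h1
    · have := hleaf x h1
      omega
    · omega

theorem card_descendants (hG : IsPerfectRootedMary m r G ρ) {x : V} {k : ℕ}
    (h : G.dist ρ x + k ≤ r) : #(G.descendants ρ x k) = m ^ k := by
  induction k generalizing x with
  | zero => simp [hG.isTree.connected.descendants_zero]
  | succ k ih =>
    rw [hG.isTree.descendants_succ, card_biUnion (hG.isTree.pairwiseDisjoint_descendants _ k),
      sum_congr rfl fun c hc => ih (by rw [mem_descendants] at hc; omega), sum_const,
      hG.card_descendants_one (by omega), smul_eq_mul, pow_succ, mul_comm]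

theorem card_filter_dist_le (hG : IsPerfectRootedMary m r G ρ) {d : ℕ} (hd : d ≤ r) :
    #{v | G.dist ρ v ≤ d} = ∑ j ∈ range (d + 1), m ^ j := by
  rw [card_eq_sum_card_fiberwise (f := G.dist ρ) (t := range (d + 1))
    fun v hv => by simpa [Nat.lt_succ_iff] using hv]
  refine sum_congr rfl fun j hj => ?_
  rw [mem_range] at hj
  rw [← hG.card_descendants (x := ρ) (by simp; omega)]
  congr 1
  ext v
  simp only [mem_filter, mem_univ, true_and, mem_descendants, dist_self, zero_add]
  omega

theorem card_meetPairs (hG : IsPerfectRootedMary m r G ρ) {t a : ℕ} (w : V) (hat : a ≤ t) :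
    #(G.meetPairs ρ t w a) = if G.dist ρ w + max a (t - a) ≤ r then
      (if a = 0 ∨ a = t then m ^ t else (m * m - m) * m ^ (t - 2)) else 0 := by
  split_ifs with hr hend
  · rw [hG.isTree.meetPairs_of_eq_zero_or_eq w hend, card_product, hG.card_descendants (by omega),
      hG.card_descendants (by omega), ← pow_add, Nat.add_sub_cancel' hat]
  · have hchild {c : V} (hc : c ∈ G.descendants ρ w 1) : G.dist ρ c = G.dist ρ w + 1 :=
      (mem_descendants.1 hc).2
    have hdisj : ((G.descendants ρ w 1).offDiag : Set (V × V)).PairwiseDisjoint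
        fun q => G.descendants ρ q.1 (a - 1) ×ˢ G.descendants ρ q.2 (t - a - 1) := by
      rintro ⟨c, c'⟩ - ⟨e, e'⟩ - hne
      rw [Function.onFun, disjoint_product]
      by_cases hce : c = e
      · exact Or.inr (hG.isTree.pairwiseDisjoint_descendants univ _ (by simp) (by simp)
          fun h => hne (Prod.ext hce h))
      · exact Or.inl (hG.isTree.pairwiseDisjoint_descendants univ _ (by simp) (by simp) hce)
    rw [hG.isTree.meetPairs_eq_biUnion w (by omega) (by omega), card_biUnion hdisj,
      sum_const_nat fun q hq => ?_, offDiag_card, hG.card_descendants_one (by omega)]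
    rw [mem_offDiag] at hq
    rw [card_product, hG.card_descendants (by rw [hchild hq.1]; omega),
      hG.card_descendants (by rw [hchild hq.2.1]; omega), ← pow_add]
    congr 1
    omega
  · have hempty : G.descendants ρ w a = ∅ ∨ G.descendants ρ w (t - a) = ∅ := by
      by_cases h : r < G.dist ρ w + a
      · exact Or.inl (hG.descendants_eq_empty h)
      · exact Or.inr (hG.descendants_eq_empty (by omega))
    rcases hempty with h | h <;> simp [meetPairs, h]

theorem card_filter_dist_eq (hG : IsPerfectRootedMary m r G ρ) {t : ℕ} (htr : t ≤ r) :
    #{p : V × V | G.dist p.1 p.2 = t} = ∑ a ∈ range (t + 1),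
      (if a = 0 ∨ a = t then m ^ t else (m * m - m) * m ^ (t - 2)) *
        ∑ j ∈ range (r - max a (t - a) + 1), m ^ j := by
  rw [hG.isTree.filter_dist_eq_eq_biUnion_meetPairs,
    card_biUnion (hG.isTree.pairwiseDisjoint_meetPairs t), sum_product, sum_comm]
  refine sum_congr rfl fun a ha => ?_
  rw [mem_range] at ha
  dsimp only
  rw [sum_congr rfl fun w _ => hG.card_meetPairs w (by omega), ← sum_filter, sum_const,
    smul_eq_mul, mul_comm, ← hG.card_filter_dist_le (d := r - max a (t - a)) (by omega)]
  congr 2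
  ext w
  simp only [Finset.mem_filter, mem_univ, true_and]
  omega

theorem induce_dist_le (hG : IsPerfectRootedMary m r G ρ) {d : ℕ} (hd : d ≤ r) :
    IsPerfectRootedMary m d (G.induce {v | G.dist ρ v ≤ d}) ⟨ρ, by simp⟩ := by
  obtain ⟨hT, hroot, hdeg, -, -, hleaf⟩ := id hG
  have hdist := hT.connected.dist_induce_dist_le (ρ := ρ) (d := d)
  refine ⟨⟨hT.connected.induce_dist_le d, hT.isAcyclic.induce _⟩, fun hd0 => ?_,
    fun v hv => ?_, fun v => hdist v ▸ v.2, ?_, fun v hv => ?_⟩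
  · rw [hT.connected.degree_induce_dist_le_of_lt (by simpa using hd0)]
    exact hroot (by omega)
  · have hvρ : (v : V) ≠ ρ := fun h => hv (Subtype.ext h)
    have hvd : G.dist ρ v ≤ d := v.2
    rcases hvd.lt_or_eq with hlt | heq
    · rw [hT.connected.degree_induce_dist_le_of_lt hlt]
      exact hdeg v hvρ
    · exact Or.inl (hT.degree_induce_dist_le_of_eq heq hvρ)
  · obtain ⟨v, hv⟩ := hG.exists_dist_eq hd
    exact ⟨⟨v, by simp [hv]⟩, by rw [hdist]; exact hv⟩
  · rw [hdist]
    by_contra hne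
    have hlt : G.dist ρ v < d := lt_of_le_of_ne v.2 hne
    rw [hT.connected.degree_induce_dist_le_of_lt hlt] at hv
    have := hleaf v hv
    omega

theorem card_dist_le (hG : IsPerfectRootedMary m r G ρ) {d : ℕ} (hd : d ≤ r) :
    Fintype.card {v | G.dist ρ v ≤ d} = ∑ j ∈ range (d + 1), m ^ j := by
  rw [← hG.card_filter_dist_le hd, ← Set.toFinset_card]
  congr 1
  ext v
  simp

end IsPerfectRootedMary

section GeomSum

variable {R : Type*} [CommRing R]

theorem sum_range_min_sub {M : Type*} [AddCommMonoid M] (f : ℕ → M) (n : ℕ) :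
    ∑ a ∈ range (2 * n + 1), f (min a (2 * n - a)) = 2 • ∑ k ∈ range n, f k + f n := by
  induction n generalizing f with
  | zero => simp
  | succ n ih =>
    have hmid : ∀ b ∈ range (2 * n + 1),
        f (min (b + 1) (2 * (n + 1) - (b + 1))) = (f ∘ (· + 1)) (min b (2 * n - b)) := by
      intro b hb
      simp only [mem_range] at hb
      simp only [Function.comp_apply]
      congr 1
      omega
    have hends :
        min 0 (2 * (n + 1) - 0) = 0 ∧ min (2 * n + 2) (2 * (n + 1) - (2 * n + 2)) = 0 := by
      omega
    rw [show 2 * (n + 1) + 1 = 2 * n + 1 + 1 + 1 by ring, sum_range_succ, sum_range_succ',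
      sum_congr rfl hmid, ih, sum_range_succ' f n, hends.1, hends.2]
    simp only [Function.comp_apply, smul_add]
    abel

theorem mul_geom_sum_add_sum_geom_sum (x : R) (e σ : ℕ) :
    x * ∑ j ∈ range (e + 1), x ^ j + (x - 1) * ∑ k ∈ range σ, ∑ j ∈ range (e + k + 2), x ^ j
      + (σ + 1) = ∑ j ∈ range (e + σ + 2), x ^ j := by
  induction σ with
  | zero => simp [geom_sum_succ]
  | succ σ ih =>
    rw [sum_range_succ (fun k => ∑ j ∈ range (e + k + 2), x ^ j), mul_add,
      show e + (σ + 1) + 2 = e + σ + 2 + 1 by ring, geom_sum_succ (n := e + σ + 2), ← ih]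
    push_cast
    ring

theorem sum_range_ite_mul_geom_sum_of_even (x : R) {t r : ℕ} (ht : Even t) (ht0 : t ≠ 0)
    (htr : t ≤ r) :
    ∑ a ∈ range (t + 1), (if a = 0 ∨ a = t then x ^ t else (x * x - x) * x ^ (t - 2)) *
        ∑ j ∈ range (r - max a (t - a) + 1), x ^ j =
      (x + 1) * x ^ (t / 2 - 1) *
          (∑ j ∈ range (r + 1), x ^ j - ∑ j ∈ range (t / 2 - 1 + 1), x ^ j) -
        2 * ((t / 2 : ℕ) : R) * x ^ (t - 1) := by
  obtain ⟨σ, rfl⟩ : ∃ σ, t = 2 * (σ + 1) := ⟨t / 2 - 1, by obtain ⟨k, hk⟩ := ht; omega⟩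
  obtain ⟨e, rfl⟩ := Nat.exists_eq_add_of_le htr
  set f : ℕ → R := fun k => (if k = 0 then x ^ (2 * (σ + 1)) else (x * x - x) * x ^ (2 * σ)) *
    ∑ j ∈ range (e + k + 1), x ^ j with hf
  have hsummand : ∀ a ∈ range (2 * (σ + 1) + 1),
      (if a = 0 ∨ a = 2 * (σ + 1) then x ^ (2 * (σ + 1))
        else (x * x - x) * x ^ (2 * (σ + 1) - 2)) *
        ∑ j ∈ range (2 * (σ + 1) + e - max a (2 * (σ + 1) - a) + 1), x ^ j =
      f (min a (2 * (σ + 1) - a)) := by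
    intro a ha
    simp only [mem_range] at ha
    simp only [hf]
    congr 2
    · exact propext (by omega)
    · congr 2; omega
  have hsplit : ∑ j ∈ range (2 * (σ + 1) + e + 1), x ^ j =
      ∑ j ∈ range (σ + 1), x ^ j + x ^ (σ + 1) * ∑ j ∈ range (e + σ + 2), x ^ j := by
    rw [show 2 * (σ + 1) + e + 1 = σ + 1 + (e + σ + 2) by ring, sum_range_add, mul_sum]
    simp only [pow_add]
  rw [sum_congr rfl hsummand, sum_range_min_sub, sum_range_succ', hsplit]
  have key := mul_geom_sum_add_sum_geom_sum x e σ
  simp only [hf, if_pos, Nat.succ_ne_zero, if_false, Nat.add_zero, nsmul_eq_mul, ← mul_sum]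
    at key ⊢
  simp only [Nat.add_sub_cancel, show 2 * (σ + 1) - 1 = 2 * σ + 1 by omega,
    show 2 * (σ + 1) / 2 = σ + 1 by omega]
  push_cast
  ring_nf at key ⊢
  linear_combination 2 * x ^ (2 * σ + 1) * key

end GeomSum

theorem rooted_path_count_even_small_general (m r : ℕ)
    {W : Type} [Fintype W] [DecidableEq W] (G : SimpleGraph W) [DecidableRel G.Adj]
    (ρ : W) (hG : IsPerfectRootedMary m r G ρ)
    (VR : ℕ → ℚ)
    (hVR : ∀ (d : ℕ) (X : Type) [Fintype X] (H : SimpleGraph X) [DecidableRel H.Adj]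
      (ρ' : X), IsPerfectRootedMary m d H ρ' → (Fintype.card X : ℚ) = VR d)
    (t : ℕ) (ht : Even t) (ht1 : 1 ≤ t) (htr : t ≤ r) :
    (pathCount G t : ℚ) =
      (1 / 2) * ((m : ℚ) + 1) * (m : ℚ) ^ (t / 2 - 1) * (VR r - VR (t / 2 - 1)) -
        ((t / 2 : ℕ) : ℚ) * (m : ℚ) ^ (t - 1) := by
  have hVR_eq (d : ℕ) (hd : d ≤ r) : VR d = ∑ j ∈ range (d + 1), (m : ℚ) ^ j := by
    rw [← hVR d _ _ _ (hG.induce_dist_le hd), hG.card_dist_le hd]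
    push_cast
    rfl
  have hcount : ((2 * pathCount G t : ℕ) : ℚ) = ∑ a ∈ range (t + 1),
      (if a = 0 ∨ a = t then (m : ℚ) ^ t else ((m : ℚ) * m - m) * (m : ℚ) ^ (t - 2)) *
        ∑ j ∈ range (r - max a (t - a) + 1), (m : ℚ) ^ j := by
    rw [← card_filter_dist_eq_two_mul_pathCount (by omega), hG.card_filter_dist_eq htr]
    push_cast [Nat.cast_sub (Nat.le_mul_self m)]
    rfl
  rw [sum_range_ite_mul_geom_sum_of_even (m : ℚ) ht (by omega) htr, ← hVR_eq r le_rfl,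
    ← hVR_eq _ (by omega)] at hcount
  push_cast at hcount
  linarith

theorem rooted_path_count_even_small (m r : ℕ) (hm : 2 ≤ m)
    {W : Type} [Fintype W] [DecidableEq W] (G : SimpleGraph W) [DecidableRel G.Adj]
    (ρ : W) (hG : IsPerfectRootedMary m r G ρ)
    (VR : ℕ → ℚ)
    (hVR : ∀ (d : ℕ) (X : Type) [Fintype X] (H : SimpleGraph X) [DecidableRel H.Adj]
      (ρ' : X), IsPerfectRootedMary m d H ρ' → (Fintype.card X : ℚ) = VR d)
    (t : ℕ) (ht : Even t) (ht1 : 1 ≤ t) (htr : t ≤ r) :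
    (pathCount G t : ℚ) =
      (1 / 2) * ((m : ℚ) + 1) * (m : ℚ) ^ (t / 2 - 1) * (VR r - VR (t / 2 - 1)) -
        ((t / 2 : ℕ) : ℚ) * (m : ℚ) ^ (t - 1) :=
  rooted_path_count_even_small_general m r G ρ hG VR hVR t ht ht1 htr
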